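/- In the complex group algebra of the free group F_N on N ≥ 1 generators, for every n ≥ 2 one has X_1 · X_n = X_{n+1} + (2N−1)·X_{n−1}. -/

import Mathlib

/-!
Left multiplication by `X_1` sends a word `v` to its `2N` neighbours `p⁻¹ v` in the Cayley graph,
`p` running over the letters. If `v ≠ 1`, exactly one letter, the first letter of `v`, shortens
`v`; the other `2N - 1` lengthen it. Hence the coefficient of `v` in `X_1 X_n` is `1` when
`|v| = n + 1`, `2N - 1` when `|v| = n - 1`, and `0` otherwise (for `v = 1` every neighbour has
length `1 ≠ n`).
-/

/-- `Xop N n` is the operator `X_n`: the sum, in the complex group algebra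
`ℂ[F_N] = MonoidAlgebra ℂ (FreeGroup (Fin N))`, of the basis elements of all
words `w` whose reduced word has length `n`. Note `Xop N 0 = 1`. -/
noncomputable def Xop (N n : ℕ) : MonoidAlgebra ℂ (FreeGroup (Fin N)) :=
  ∑ᶠ w ∈ {w : FreeGroup (Fin N) | (FreeGroup.toWord w).length = n},
    MonoidAlgebra.of ℂ (FreeGroup (Fin N)) w

/-- The canonical trace `τ` on `ℂ[F_N]`: the coefficient at the identity. -/
noncomputable def tr {N : ℕ} (a : MonoidAlgebra ℂ (FreeGroup (Fin N))) : ℂ := a.coeff 1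

open FreeGroup MonoidAlgebra

namespace FreeGroup

variable {α : Type*} [DecidableEq α]

lemma finite_setOf_length_toWord_eq [Finite α] (n : ℕ) :
    {w : FreeGroup α | w.toWord.length = n}.Finite :=
  (List.finite_length_eq _ n).preimage toWord_injective.injOn

lemma range_mk_singleton : Set.range (fun p : α × Bool ↦ mk [p]) =
    {w : FreeGroup α | w.toWord.length = 1} := by
  ext w
  simp only [Set.mem_range, Set.mem_ofPred_eq, List.length_eq_one_iff]
  constructor
  · rintro ⟨p, rfl⟩
    exact ⟨p, reduce_singleton p⟩
  · rintro ⟨p, hp⟩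
    exact ⟨p, by rw [← hp, mk_toWord]⟩

lemma mk_singleton_injective : Function.Injective (fun p : α × Bool ↦ mk [p]) := by
  intro p q h
  simpa using congrArg toWord h

lemma length_toWord_inv_mk_singleton_mul (p : α × Bool) (v : FreeGroup α) :
    ((mk [p])⁻¹ * v).toWord.length =
      if v.toWord.head? = some p then v.toWord.length - 1 else v.toWord.length + 1 := by
  rw [toWord_mul, toWord_inv, toWord_mk, reduce_singleton]
  obtain ⟨a, b⟩ := p
  rw [invRev, List.map_singleton, List.reverse_singleton, List.singleton_append, reduce.cons,
    reduce_toWord]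
  rcases v.toWord with _ | ⟨⟨c, d⟩, t⟩
  · rfl
  · by_cases h : a = c ∧ b = d <;> simp [h, eq_comm (a := c), eq_comm (a := d)]

lemma sum_length_toWord_inv_mk_singleton_mul [Fintype α] {M : Type*} [AddCommMonoid M]
    (f : ℕ → M) (v : FreeGroup α) :
    ∑ p : α × Bool, f ((mk [p])⁻¹ * v).toWord.length =
      if v = 1 then Fintype.card (α × Bool) • f 1
      else f (v.toWord.length - 1) + (Fintype.card (α × Bool) - 1) • f (v.toWord.length + 1) := by
  simp only [length_toWord_inv_mk_singleton_mul, ← toWord_eq_nil_iff]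
  rcases v.toWord with _ | ⟨q, t⟩
  · simp
  · simp only [List.head?_cons, Option.some_inj]
    rw [← Finset.add_sum_erase _ _ (Finset.mem_univ q), Finset.sum_congr rfl fun p hp ↦
      by rw [if_neg (Finset.ne_of_mem_erase hp).symm],
      Finset.sum_const, Finset.card_erase_of_mem (Finset.mem_univ q)]
    simp

end FreeGroup

lemma coeff_Xop {N : ℕ} (n : ℕ) (v : FreeGroup (Fin N)) :
    (Xop N n).coeff v = if v.toWord.length = n then 1 else 0 := by
  rw [Xop, finsum_mem_eq_finite_toFinset_sum _ (finite_setOf_length_toWord_eq n), coeff_sum]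
  simp [Finsupp.single_apply]

lemma Xop_one (N : ℕ) : Xop N 1 = ∑ p : Fin N × Bool, of ℂ _ (mk [p]) := by
  rw [Xop, ← range_mk_singleton, finsum_mem_range mk_singleton_injective,
    finsum_eq_sum_of_fintype]

lemma coeff_Xop_one_mul {N : ℕ} (x : MonoidAlgebra ℂ (FreeGroup (Fin N)))
    (v : FreeGroup (Fin N)) :
    (Xop N 1 * x).coeff v = ∑ p : Fin N × Bool, x.coeff ((mk [p])⁻¹ * v) := by
  simp [Xop_one, Finset.sum_mul, of_apply]

theorem stmt_1_general (N : ℕ) (n : ℕ) (hn : 2 ≤ n) :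
    Xop N 1 * Xop N n = Xop N (n + 1) + ((2 * N - 1 : ℕ) : ℂ) • Xop N (n - 1) := by
  ext v
  simp only [coeff_Xop_one_mul, coeff_add, coeff_smul, Finsupp.add_apply, Finsupp.smul_apply,
    coeff_Xop, sum_length_toWord_inv_mk_singleton_mul (fun m ↦ if m = n then (1 : ℂ) else 0)]
  by_cases hv : v = 1
  · have h1 : 1 ≠ n := by omega
    have h0 : 0 ≠ n - 1 := by omega
    simp [hv, h1, h0]
  · have hpos : 0 < v.toWord.length := by
      rwa [List.length_pos_iff, Ne, toWord_eq_nil_iff]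
    have hdown : v.toWord.length - 1 = n ↔ v.toWord.length = n + 1 := by omega
    have hup : v.toWord.length + 1 = n ↔ v.toWord.length = n - 1 := by omega
    simp [hv, hdown, hup, mul_comm N]

theorem stmt_1 (N : ℕ) (hN : 1 ≤ N) (n : ℕ) (hn : 2 ≤ n) :
    Xop N 1 * Xop N n = Xop N (n + 1) + ((2 * N - 1 : ℕ) : ℂ) • Xop N (n - 1) :=
  stmt_1_general N n hn
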